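/- arXiv:2406.17371 — 4 statements merged into one kernel-verified Lean document; each statement's English description precedes it below -/
import Mathlib

section
/- For integers n ≥ k ≥ 4 and 1 ≤ a < k/2, the n-vertex graph H_{n,k,a} contains no cycle of length k or more. -/
/-!
Walk once around the cycle and let `e X` be the number of its vertices in `X`. A vertex of `B`
has all its neighbours in `A`, so each visit to `B` is followed by a visit to `A`, and distinct
visits by distinct ones: `e B ≤ e A`. If the cycle meets both `A` and `C`, it must leave `C`
somewhere, and since `C` has no neighbours in `B` it leaves into `A`; that vertex of `A` is not
preceded by one of `B`, so in fact `e B ≤ e A - 1`. Hence the length `e A + e B + e C` is at most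
`2|A| - 1 + |C| = k - 1`. A cycle avoiding `C` lies in the bipartite part and has length at most
`2|A| < k`, and one avoiding `A` lies in `C` and has length at most `|C| < k`.
-/

open SimpleGraph Finset

namespace List

variable {α : Type*}

theorem countP_le_countP_add_countP {l : List α} {p q r : α → Bool}
    (h : ∀ x ∈ l, p x → q x ∨ r x) : l.countP p ≤ l.countP q + l.countP r := by
  induction l with
  | nil => simp
  | cons x l ih =>
    simp only [mem_cons, forall_eq_or_imp, countP_cons] at h ⊢
    grind

theorem countP_add_countP_le_countP {l : List α} {p q r : α → Bool}
    (hqr : ∀ x ∈ l, q x → ¬ r x) (hq : ∀ x ∈ l, q x → p x) (hr : ∀ x ∈ l, r x → p x) :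
    l.countP q + l.countP r ≤ l.countP p := by
  induction l with
  | nil => simp
  | cons x l ih =>
    simp only [mem_cons, forall_eq_or_imp, countP_cons] at hqr hq hr ⊢
    grind

theorem Nodup.countP_mem_le_card [DecidableEq α] {l : List α} (hl : l.Nodup) (X : Finset α) :
    l.countP (· ∈ X) ≤ #X := by
  rw [countP_eq_length_filter, ← toFinset_card_of_nodup (hl.filter _)]
  exact card_le_card fun x hx => by simpa using (mem_filter.mp (mem_toFinset.mp hx)).2

end List

namespace SimpleGraph.Walk

variable {V : Type*} {G : SimpleGraph V} {v : V}

theorem countP_darts_fst_eq_countP_darts_snd (c : G.Walk v v) (p : V → Bool) :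
    c.darts.countP (fun d => p d.fst) = c.darts.countP (fun d => p d.snd) := by
  have hfst := congrArg (List.countP p) c.map_fst_darts
  have hsnd := congrArg (List.countP p) c.map_snd_darts
  simp only [List.countP_map] at hfst hsnd
  exact hfst.trans (hsnd.trans (c.tail_support_perm_dropLast_support.countP_eq p)).symm

theorem exists_dart_fst_mem_snd_notMem [DecidableEq V] (c : G.Walk v v) {S : Set V} {x y : V}
    (hx : x ∈ c.support) (hy : y ∈ c.support) (hxS : x ∈ S) (hyS : y ∉ S) :
    ∃ d ∈ c.darts, d.fst ∈ S ∧ d.snd ∉ S := by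
  by_cases hv : v ∈ S
  · obtain ⟨d, hd, h⟩ := (c.takeUntil y hy).exists_boundary_dart S hv hyS
    exact ⟨d, c.darts_takeUntil_subset_darts hy hd, h⟩
  · obtain ⟨d, hd, h⟩ := (c.dropUntil x hx).exists_boundary_dart S hxS hv
    exact ⟨d, c.darts_dropUntil_subset_darts hx hd, h⟩

theorem IsCycle.countP_darts_snd_mem_le_card [DecidableEq V] {c : G.Walk v v}
    (hc : c.IsCycle) (X : Finset V) : c.darts.countP (fun d => d.snd ∈ X) ≤ #X := by
  have h := congrArg (List.countP (· ∈ X)) c.map_snd_darts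
  rw [List.countP_map] at h
  exact h ▸ hc.support_nodup.countP_mem_le_card X

theorem IsCycle.length_lt_two_mul_card_add_card [DecidableEq V] {c : G.Walk v v}
    (hc : c.IsCycle) {A B C : Finset V} (hcover : ∀ x, x ∈ A ∪ B ∪ C)
    (hAC : Disjoint A C) (hBC : Disjoint B C)
    (hB : ∀ x y, G.Adj x y → x ∈ B → y ∈ A) (hC : ∀ x y, G.Adj x y → x ∈ C → y ∈ A ∪ C)
    (hA₀ : A.Nonempty) (hC₀ : C.Nonempty) :
    c.length < 2 * #A + #C := by
  set eA := c.darts.countP (fun d => d.snd ∈ A)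
  set eB := c.darts.countP (fun d => d.snd ∈ B) with heB
  set eC := c.darts.countP (fun d => d.snd ∈ C)
  set m := c.darts.countP (fun d => d.fst ∈ C ∧ d.snd ∈ A)
  have hlen : c.length ≤ eA + eB + eC := by
    rw [← c.length_darts, ← List.countP_true]
    refine (List.countP_le_countP_add_countP (q := fun d => d.snd ∈ A ∪ B) fun d _ _ => ?_).trans
      (Nat.add_le_add_right (List.countP_le_countP_add_countP fun d _ h => ?_) _)
    · simpa [or_assoc] using hcover d.snd
    · simpa using h
  have hentersA : eB + m ≤ eA := by
    rw [heB, ← c.countP_darts_fst_eq_countP_darts_snd (· ∈ B)]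
    refine List.countP_add_countP_le_countP (fun d _ hd h => ?_) (fun d _ h => ?_) fun d _ h => ?_
    · simp only [decide_eq_true_eq] at hd h
      exact Finset.disjoint_left.mp hBC hd h.1
    · simpa using hB _ _ d.adj (by simpa using h)
    · simp_all
  have hleavesC : eA = 0 ∨ eC = 0 ∨ 0 < m := by
    rw [or_iff_not_imp_left, or_iff_not_imp_left]
    intro hA hC'
    obtain ⟨d₁, hd₁, h₁⟩ := List.countP_pos_iff.mp (Nat.pos_of_ne_zero hA)
    obtain ⟨d₂, hd₂, h₂⟩ := List.countP_pos_iff.mp (Nat.pos_of_ne_zero hC')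
    simp only [decide_eq_true_eq] at h₁ h₂
    obtain ⟨d, hd, hdC, hdC'⟩ := c.exists_dart_fst_mem_snd_notMem (S := C)
      (c.dart_snd_mem_support_of_mem_darts hd₂) (c.dart_snd_mem_support_of_mem_darts hd₁)
      h₂ (Finset.disjoint_left.mp hAC h₁)
    have := hC _ _ d.adj hdC
    exact List.countP_pos_iff.mpr ⟨d, hd, by simp_all⟩
  have := hc.countP_darts_snd_mem_le_card A
  have := hc.countP_darts_snd_mem_le_card C
  have := hA₀.card_pos
  have := hC₀.card_pos
  omega

end SimpleGraph.Walk

theorem stmt_9_general {V : Type*} [Fintype V] [DecidableEq V]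
    (G : SimpleGraph V) (k a : ℕ)
    (ha1 : 1 ≤ a) (ha2 : 2 * a < k)
    (A B C : Finset V)
    (hAB : Disjoint A B) (hAC : Disjoint A C) (hBC : Disjoint B C)
    (hunion : A ∪ B ∪ C = Finset.univ)
    (hA : A.card = a) (hC : C.card = k - 2 * a)
    (hadj : ∀ x y : V, G.Adj x y ↔ x ≠ y ∧
      ((x ∈ A ∧ y ∈ B) ∨ (x ∈ B ∧ y ∈ A) ∨ (x ∈ A ∪ C ∧ y ∈ A ∪ C))) :
    ¬ ∃ (v : V) (c : G.Walk v v), c.IsCycle ∧ k ≤ c.length := by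
  rintro ⟨v, c, hc, hlen⟩
  have hBA : ∀ x y, G.Adj x y → x ∈ B → y ∈ A := fun x y _ _ => by
    grind [Finset.disjoint_left]
  have hCAC : ∀ x y, G.Adj x y → x ∈ C → y ∈ A ∪ C := fun x y _ _ => by
    grind [Finset.disjoint_left]
  have := hc.length_lt_two_mul_card_add_card (fun x => hunion ▸ mem_univ x) hAC hBC hBA hCAC
    (card_pos.mp (by omega)) (card_pos.mp (by omega))
  omega

/-- The graph `H_{n,k,a}` (vertices partitioned into `A, B, C` with `|A| = a`,
`|B| = n-k+a`, `|C| = k-2a`; edges all pairs between `A` and `B` together with all pairs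
inside `A ∪ C`) contains no cycle of length `k` or more, for `n ≥ k ≥ 4`, `1 ≤ a < k/2`. -/
theorem stmt_9 {V : Type*} [Fintype V] [DecidableEq V]
    (G : SimpleGraph V) (n k a : ℕ)
    (hnk : k ≤ n) (hk : 4 ≤ k) (ha1 : 1 ≤ a) (ha2 : 2 * a < k)
    (A B C : Finset V)
    (hAB : Disjoint A B) (hAC : Disjoint A C) (hBC : Disjoint B C)
    (hunion : A ∪ B ∪ C = Finset.univ)
    (hA : A.card = a) (hB : B.card = n - k + a) (hC : C.card = k - 2 * a)
    (hadj : ∀ x y : V, G.Adj x y ↔ x ≠ y ∧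
      ((x ∈ A ∧ y ∈ B) ∨ (x ∈ B ∧ y ∈ A) ∨ (x ∈ A ∪ C ∧ y ∈ A ∪ C))) :
    ¬ ∃ (v : V) (c : G.Walk v v), c.IsCycle ∧ k ≤ c.length :=
  stmt_9_general G k a ha1 ha2 A B C hAB hAC hBC hunion hA hC hadj
end

section
/- For n ≥ 2k + 2a, the bipartite graph F_{b,n,n-k,a} has minimum degree a and contains no cycle of length 2n - 2k or more. -/
open Finset

private lemma walk_support_eq_map {V : Type*} {G : SimpleGraph V} {u v : V} (p : G.Walk u v) :
    p.support = (List.range (p.length + 1)).map p.getVert := by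
  induction p with
  | nil => simp [SimpleGraph.Walk.getVert]
  | @cons x y z h q ih =>
    have key : (List.range (q.length + 1 + 1)).map (SimpleGraph.Walk.cons h q).getVert
        = x :: (List.range (q.length + 1)).map q.getVert := by
      rw [List.range_succ_eq_map, List.map_cons, List.map_map]
      rfl
    rw [SimpleGraph.Walk.support_cons, ih, SimpleGraph.Walk.length_cons, key]

private lemma getVert_key {V : Type*} {G : SimpleGraph V} {u : V} (p : G.Walk u u)
    (hnd : p.support.tail.Nodup) {i j : ℕ} (hij : i < j) (hj : j ≤ p.length)
    (heq : p.getVert i = p.getVert j) : i = 0 ∧ j = p.length := by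
  have htail : p.support.tail = (List.map (fun m => p.getVert (m + 1)) (List.range p.length)) := by
    rw [walk_support_eq_map, List.range_succ_eq_map, List.map_cons, List.tail_cons, List.map_map]
    rfl
  rw [htail] at hnd
  have hinj := List.inj_on_of_nodup_map hnd
  have hi0 : i = 0 := by
    by_contra h
    have h1 : i - 1 ∈ List.range p.length := List.mem_range.mpr (by omega)
    have h2 : j - 1 ∈ List.range p.length := List.mem_range.mpr (by omega)
    have := hinj h1 h2 (by
      have e1 : i - 1 + 1 = i := by omega
      have e2 : j - 1 + 1 = j := by omega
      rw [e1, e2]; exact heq)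
    omega
  subst hi0
  by_contra h
  have hjL : j < p.length := by omega
  have h1 : j - 1 ∈ List.range p.length := List.mem_range.mpr (by omega)
  have h2 : p.length - 1 ∈ List.range p.length := List.mem_range.mpr (by omega)
  have := hinj h1 h2 (by
    have e1 : j - 1 + 1 = j := by omega
    have e2 : p.length - 1 + 1 = p.length := by omega
    rw [e1, e2, ← heq, SimpleGraph.Walk.getVert_zero, SimpleGraph.Walk.getVert_length])
  omega

private lemma zmod_closed {L : ℕ} [NeZero L] (T : Finset (ZMod L))
    (hT : ∀ i ∈ T, i + 1 ∈ T) {i0 : ZMod L} (h0 : i0 ∈ T) : ∀ j : ZMod L, j ∈ T := by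
  have hm : ∀ m : ℕ, i0 + (m : ZMod L) ∈ T := by
    intro m
    induction m with
    | zero => simpa using h0
    | succ p ih =>
      have h2 := hT _ ih
      rw [Nat.cast_add, Nat.cast_one, ← add_assoc]
      exact h2
  intro j
  have := hm (j - i0).val
  rwa [ZMod.natCast_val, ZMod.cast_id, add_sub_cancel] at this

/-- For `n ≥ 2k + 2a` (with `a ≥ 1`, `b ≥ n`), the bipartite graph `F_{b,n,n-k,a}`
(parts `X = A ∪ B` with `|A| = k+a`, `|B| = n-k-a`, and `Y = C ∪ D` with `|C| = a`,
`|D| = b-a`; every vertex of `A` is joined exactly to all of `C`, every vertex of `B` is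
joined to all of `Y`) has minimum degree `a` and contains no cycle of length `2n - 2k`
or more. -/
theorem stmt_11 {V : Type*} [Fintype V] [DecidableEq V]
    (G : SimpleGraph V) [DecidableRel G.Adj] (n b k a : ℕ)
    (ha : 1 ≤ a) (hn : 2 * k + 2 * a ≤ n) (hbn : n ≤ b)
    (A B C D : Finset V)
    (hAB : Disjoint A B) (hCD : Disjoint C D)
    (hXY : Disjoint (A ∪ B) (C ∪ D)) (hunion : (A ∪ B) ∪ (C ∪ D) = Finset.univ)
    (hA : A.card = k + a) (hB : B.card = n - k - a) (hC : C.card = a) (hD : D.card = b - a)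
    (hadj : ∀ x y : V, G.Adj x y ↔
      ((x ∈ A ∧ y ∈ C) ∨ (x ∈ C ∧ y ∈ A) ∨
       (x ∈ B ∧ y ∈ C ∪ D) ∨ (x ∈ C ∪ D ∧ y ∈ B))) :
    ((∀ v : V, a ≤ G.degree v) ∧ (∃ v : V, G.degree v = a)) ∧
      ¬ ∃ (v : V) (c : G.Walk v v), c.IsCycle ∧ 2 * (n - k) ≤ c.length := by
  -- basic disjointness facts
  have hAC : ∀ v ∈ A, v ∉ C := fun v hv hc =>
    Finset.disjoint_left.mp hXY (mem_union_left _ hv) (mem_union_left _ hc)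
  have hAD : ∀ v ∈ A, v ∉ D := fun v hv hc =>
    Finset.disjoint_left.mp hXY (mem_union_left _ hv) (mem_union_right _ hc)
  have hBC : ∀ v ∈ B, v ∉ C := fun v hv hc =>
    Finset.disjoint_left.mp hXY (mem_union_right _ hv) (mem_union_left _ hc)
  have hBD : ∀ v ∈ B, v ∉ D := fun v hv hc =>
    Finset.disjoint_left.mp hXY (mem_union_right _ hv) (mem_union_right _ hc)
  have hABd : ∀ v ∈ A, v ∉ B := fun v hv hc => Finset.disjoint_left.mp hAB hv hc
  have hCDd : ∀ v ∈ C, v ∉ D := fun v hv hc => Finset.disjoint_left.mp hCD hv hc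
  have hcover : ∀ v : V, v ∈ A ∨ v ∈ B ∨ v ∈ C ∨ v ∈ D := by
    intro v
    have : v ∈ (A ∪ B) ∪ (C ∪ D) := hunion ▸ Finset.mem_univ v
    simp only [Finset.mem_union] at this
    tauto
  -- neighbor sets
  have nbrA : ∀ v ∈ A, G.neighborFinset v = C := by
    intro v hv
    ext u
    rw [SimpleGraph.mem_neighborFinset, hadj]
    constructor
    · rintro (⟨_, h⟩ | ⟨h, _⟩ | ⟨h, _⟩ | ⟨h, _⟩)
      · exact h
      · exact absurd h (hAC v hv)
      · exact absurd h (hABd v hv)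
      · rcases Finset.mem_union.mp h with h' | h'
        · exact absurd h' (hAC v hv)
        · exact absurd h' (hAD v hv)
    · intro hu; exact Or.inl ⟨hv, hu⟩
  have nbrB : ∀ v ∈ B, G.neighborFinset v = C ∪ D := by
    intro v hv
    ext u
    rw [SimpleGraph.mem_neighborFinset, hadj]
    constructor
    · rintro (⟨h, _⟩ | ⟨h, _⟩ | ⟨_, h⟩ | ⟨h, _⟩)
      · exact absurd hv (hABd v h)
      · exact absurd h (hBC v hv)
      · exact h
      · rcases Finset.mem_union.mp h with h' | h'
        · exact absurd h' (hBC v hv)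
        · exact absurd h' (hBD v hv)
    · intro hu; exact Or.inr (Or.inr (Or.inl ⟨hv, hu⟩))
  have nbrC : ∀ v ∈ C, G.neighborFinset v = A ∪ B := by
    intro v hv
    ext u
    rw [SimpleGraph.mem_neighborFinset, hadj]
    constructor
    · rintro (⟨h, _⟩ | ⟨_, h⟩ | ⟨h, _⟩ | ⟨_, h⟩)
      · exact absurd hv (hAC v h)
      · exact Finset.mem_union_left _ h
      · exact absurd hv (hBC v h)
      · exact Finset.mem_union_right _ h
    · intro hu
      rcases Finset.mem_union.mp hu with h' | h'
      · exact Or.inr (Or.inl ⟨hv, h'⟩)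
      · exact Or.inr (Or.inr (Or.inr ⟨Finset.mem_union_left _ hv, h'⟩))
  have nbrD : ∀ v ∈ D, G.neighborFinset v = B := by
    intro v hv
    ext u
    rw [SimpleGraph.mem_neighborFinset, hadj]
    constructor
    · rintro (⟨h, _⟩ | ⟨h, _⟩ | ⟨h, _⟩ | ⟨_, h⟩)
      · exact absurd hv (hAD v h)
      · exact absurd hv (hCDd v h)
      · exact absurd hv (hBD v h)
      · exact h
    · intro hu
      exact Or.inr (Or.inr (Or.inr ⟨Finset.mem_union_right _ hv, hu⟩))
  have cardCD : (C ∪ D).card = b := by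
    rw [Finset.card_union_of_disjoint hCD, hC, hD]; omega
  have cardAB : (A ∪ B).card = n := by
    rw [Finset.card_union_of_disjoint hAB, hA, hB]; omega
  constructor
  · constructor
    · intro v
      rcases hcover v with hv | hv | hv | hv
      · rw [SimpleGraph.degree, nbrA v hv, hC]
      · rw [SimpleGraph.degree, nbrB v hv, cardCD]; omega
      · rw [SimpleGraph.degree, nbrC v hv, cardAB]; omega
      · rw [SimpleGraph.degree, nbrD v hv, hB]; omega
    · obtain ⟨v, hv⟩ : A.Nonempty := Finset.card_pos.mp (by omega)
      exact ⟨v, by rw [SimpleGraph.degree, nbrA v hv, hC]⟩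
  · rintro ⟨v0, c, hcyc, hlen⟩
    set L := c.length with hLdef
    have hL3 : 3 ≤ L := hcyc.three_le_length
    haveI : NeZero L := ⟨by omega⟩
    haveI : Fact (1 < L) := ⟨by omega⟩
    set g : ZMod L → V := fun i => c.getVert i.val with hgdef
    have hgadj : ∀ i : ZMod L, G.Adj (g i) (g (i + 1)) := by
      intro i
      have hiv : i.val < L := ZMod.val_lt i
      have hval : (i + 1).val = (i.val + 1) % L := by
        rw [ZMod.val_add, ZMod.val_one]
      by_cases h : i.val + 1 < L
      · have : (i + 1).val = i.val + 1 := by rw [hval, Nat.mod_eq_of_lt h]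
        simp only [hgdef, this]
        exact c.adj_getVert_succ hiv
      · have hend : i.val + 1 = L := by omega
        have h0 : (i + 1).val = 0 := by rw [hval, hend, Nat.mod_self]
        simp only [hgdef, h0, SimpleGraph.Walk.getVert_zero]
        have := c.adj_getVert_succ hiv
        rw [hend] at this
        rwa [SimpleGraph.Walk.getVert_length] at this
    have hginj : Function.Injective g := by
      intro i j hij
      by_contra hne
      have hvne : i.val ≠ j.val := fun h => hne (ZMod.val_injective L h)
      rcases Nat.lt_or_ge i.val j.val with hlt | hge
      · have := getVert_key c hcyc.support_nodup hlt (le_of_lt (ZMod.val_lt j)) hij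
        have := ZMod.val_lt j
        omega
      · have hlt : j.val < i.val := by omega
        have := getVert_key c hcyc.support_nodup hlt (le_of_lt (ZMod.val_lt i)) hij.symm
        have := ZMod.val_lt i
        omega
    set IA : Finset (ZMod L) := Finset.univ.filter (fun i => g i ∈ A) with hIA
    set IB : Finset (ZMod L) := Finset.univ.filter (fun i => g i ∈ B) with hIB
    set IC : Finset (ZMod L) := Finset.univ.filter (fun i => g i ∈ C) with hIC
    set ID : Finset (ZMod L) := Finset.univ.filter (fun i => g i ∈ D) with hID
    have memIA : ∀ i, i ∈ IA ↔ g i ∈ A := by intro i; simp [hIA]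
    have memIB : ∀ i, i ∈ IB ↔ g i ∈ B := by intro i; simp [hIB]
    have memIC : ∀ i, i ∈ IC ↔ g i ∈ C := by intro i; simp [hIC]
    have memID : ∀ i, i ∈ ID ↔ g i ∈ D := by intro i; simp [hID]
    -- step maps
    have stepA : ∀ i ∈ IA, i + 1 ∈ IC := by
      intro i hi
      rw [memIA] at hi; rw [memIC]
      rcases (hadj _ _).mp (hgadj i) with ⟨_, h⟩ | ⟨h, _⟩ | ⟨h, _⟩ | ⟨h, _⟩
      · exact h
      · exact absurd h (hAC _ hi)
      · exact absurd h (hABd _ hi)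
      · rcases Finset.mem_union.mp h with h' | h'
        · exact absurd h' (hAC _ hi)
        · exact absurd h' (hAD _ hi)
    have stepD : ∀ i ∈ ID, i + 1 ∈ IB := by
      intro i hi
      rw [memID] at hi; rw [memIB]
      rcases (hadj _ _).mp (hgadj i) with ⟨h, _⟩ | ⟨h, _⟩ | ⟨h, _⟩ | ⟨_, h⟩
      · exact absurd hi (hAD _ h)
      · exact absurd hi (hCDd _ h)
      · exact absurd hi (hBD _ h)
      · exact h
    have stepC : ∀ i ∈ IC, i + 1 ∈ IA ∪ IB := by
      intro i hi
      rw [memIC] at hi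
      rcases (hadj _ _).mp (hgadj i) with ⟨h, _⟩ | ⟨_, h⟩ | ⟨h, _⟩ | ⟨_, h⟩
      · exact absurd hi (hAC _ h)
      · exact Finset.mem_union_left _ ((memIA _).mpr h)
      · exact absurd hi (hBC _ h)
      · exact Finset.mem_union_right _ ((memIB _).mpr h)
    -- cardinalities
    have succ_inj : Function.Injective (fun i : ZMod L => i + 1) :=
      fun x y h => by simpa using h
    have cAC : IA.card ≤ IC.card :=
      Finset.card_le_card_of_injOn _ stepA (fun x _ y _ h => succ_inj h)
    have cDB : ID.card ≤ IB.card :=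
      Finset.card_le_card_of_injOn _ stepD (fun x _ y _ h => succ_inj h)
    have cC : IC.card ≤ a := by
      rw [← hC]
      exact Finset.card_le_card_of_injOn g (fun i hi => (memIC i).mp hi)
        (fun x _ y _ h => hginj h)
    have cB : IB.card ≤ n - k - a := by
      rw [← hB]
      exact Finset.card_le_card_of_injOn g (fun i hi => (memIB i).mp hi)
        (fun x _ y _ h => hginj h)
    -- partition of indices
    have hsum : IA.card + IB.card + IC.card + ID.card = L := by
      have hdisjAB : Disjoint IA IB := Finset.disjoint_left.mpr (fun i hi hj =>
        hABd _ ((memIA i).mp hi) ((memIB i).mp hj))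
      have hdisjABC : Disjoint (IA ∪ IB) IC := Finset.disjoint_left.mpr (fun i hi hj => by
        rcases Finset.mem_union.mp hi with h | h
        · exact hAC _ ((memIA i).mp h) ((memIC i).mp hj)
        · exact hBC _ ((memIB i).mp h) ((memIC i).mp hj))
      have hdisjABCD : Disjoint ((IA ∪ IB) ∪ IC) ID := Finset.disjoint_left.mpr (fun i hi hj => by
        rcases Finset.mem_union.mp hi with h | h
        · rcases Finset.mem_union.mp h with h' | h'
          · exact hAD _ ((memIA i).mp h') ((memID i).mp hj)
          · exact hBD _ ((memIB i).mp h') ((memID i).mp hj)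
        · exact hCDd _ ((memIC i).mp h) ((memID i).mp hj))
      have huniv : ((IA ∪ IB) ∪ IC) ∪ ID = Finset.univ := by
        ext i
        simp only [Finset.mem_union, Finset.mem_univ, iff_true]
        rcases hcover (g i) with h | h | h | h
        · exact Or.inl (Or.inl (Or.inl ((memIA i).mpr h)))
        · exact Or.inl (Or.inl (Or.inr ((memIB i).mpr h)))
        · exact Or.inl (Or.inr ((memIC i).mpr h))
        · exact Or.inr ((memID i).mpr h)
      have : (((IA ∪ IB) ∪ IC) ∪ ID).card = L := by rw [huniv, Finset.card_univ, ZMod.card]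
      rw [Finset.card_union_of_disjoint hdisjABCD, Finset.card_union_of_disjoint hdisjABC,
        Finset.card_union_of_disjoint hdisjAB] at this
      omega
    -- forcing equalities
    have hIAcard : IA.card = a ∧ IB.card = n - k - a ∧ IC.card = a ∧ ID.card = n - k - a := by
      omega
    obtain ⟨eA, eB, eC, eD⟩ := hIAcard
    -- IC is exactly the successor image of IA, IB of ID
    have hICimg : IC = IA.image (fun i => i + 1) := by
      apply (Finset.eq_of_subset_of_card_le ?_ ?_).symm
      · intro j hj
        obtain ⟨i, hi, rfl⟩ := Finset.mem_image.mp hj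
        exact stepA i hi
      · rw [Finset.card_image_of_injective _ succ_inj]; omega
    have hIBimg : IB = ID.image (fun i => i + 1) := by
      apply (Finset.eq_of_subset_of_card_le ?_ ?_).symm
      · intro j hj
        obtain ⟨i, hi, rfl⟩ := Finset.mem_image.mp hj
        exact stepD i hi
      · rw [Finset.card_image_of_injective _ succ_inj]; omega
    have stepC' : ∀ i ∈ IC, i + 1 ∈ IA := by
      intro i hi
      rcases Finset.mem_union.mp (stepC i hi) with h | h
      · exact h
      · exfalso
        rw [hIBimg] at h
        obtain ⟨j, hj, hji⟩ := Finset.mem_image.mp h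
        have : j = i := succ_inj hji
        subst this
        exact hCDd _ ((memIC j).mp hi) ((memID j).mp hj)
    -- closure argument
    have hclosed : ∀ i ∈ IA ∪ IC, i + 1 ∈ IA ∪ IC := by
      intro i hi
      rcases Finset.mem_union.mp hi with h | h
      · exact Finset.mem_union_right _ (stepA i h)
      · exact Finset.mem_union_left _ (stepC' i h)
    obtain ⟨i0, hi0⟩ : (IA : Finset (ZMod L)).Nonempty := Finset.card_pos.mp (by omega)
    obtain ⟨j0, hj0⟩ : (IB : Finset (ZMod L)).Nonempty := Finset.card_pos.mp (by omega)
    have := zmod_closed (IA ∪ IC) hclosed (Finset.mem_union_left _ hi0) j0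
    rcases Finset.mem_union.mp this with h | h
    · exact hABd _ ((memIA j0).mp h) ((memIB j0).mp hj0)
    · exact hBC _ ((memIB j0).mp hj0) ((memIC j0).mp h)
end

section
/- Let G be a connected bipartite graph with bipartition (X,Y), |X| = n ≤ |Y| = b, minimum degree δ(G) ≥ r ≥ 1, n ≥ 2k + 2r, and set h = ⌊(n-k-1)/2⌋. If the number of copies of K_{s,s} in G exceeds max{ g(r), g(h) }, where g(a) = C(b,s)C(n-k-1-a,s) + C(a,s)C(n,s) − C(a,s)C(n-k-1-a,s), then G contains a matching with n - k edges. -/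
/-!
If `G` has no matching with `n - k` edges, the deficiency form of Hall's theorem gives
`S ⊆ X` whose neighbourhood `T = N(S)` satisfies `|T| + k < |S|`. A copy of `K_{s,s}` with
`X`-side `A` and `Y`-side `B` either has `A ⊆ X \ S`, or `A` meets `S` and then `B ⊆ T`;
with `a = |X \ S|` and `c = |T|` this bounds the number of copies by
`C(a,s)C(b,s) + C(n,s)C(c,s) - C(a,s)C(c,s) ≤ g(c)`, as `a ≤ n - k - 1 - c`.
The minimum degree gives `r ≤ c` and `r ≤ a` (a vertex of `Y \ T` has all its neighbours in
`X \ S`). Finally `g(c) ≤ g(n - k - 1 - c)` when `c` is the larger of the two, and `g` is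
convex, so `g(c) ≤ max {g(r), g(h)}`.
-/

/-- The number of (unordered, not necessarily induced) copies of the complete bipartite
graph `K_{s,s}` in `G`: half the number of ordered pairs `(S, T)` of disjoint `s`-sets of
vertices with all edges between `S` and `T` present. -/
noncomputable def kssCount {V : Type*} [Fintype V] (G : SimpleGraph V) (s : ℕ) : ℕ :=
  ({p : Finset V × Finset V | p.1.card = s ∧ p.2.card = s ∧ Disjoint p.1 p.2 ∧
      ∀ x ∈ p.1, ∀ y ∈ p.2, G.Adj x y} : Set (Finset V × Finset V)).ncard / 2

open Finset Function

theorem Finset.exists_injective_of_forall_card_le_card_biUnion_add {ι α : Type*}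
    [Fintype ι] [DecidableEq α] (t : ι → Finset α) (k : ℕ)
    (h : ∀ S : Finset ι, #S ≤ #(S.biUnion t) + k) :
    ∃ P : Finset ι, #P = Fintype.card ι - k ∧
      ∃ f : P → α, Injective f ∧ ∀ x : P, f x ∈ t x := by
  classical
  -- Hall's theorem, once `k` new elements acceptable for every index are added.
  obtain ⟨f, hf, hft⟩ := (all_card_le_biUnion_card_iff_exists_injective
    fun x => (t x).disjSum (univ : Finset (Fin k))).mp fun S => by
      rcases S.eq_empty_or_nonempty with rfl | ⟨x, hx⟩
      · simp
      calc #S ≤ #(S.biUnion t) + k := h S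
        _ = #((S.biUnion t).disjSum univ) := by rw [card_disjSum, card_univ, Fintype.card_fin]
        _ ≤ #(S.biUnion fun x => (t x).disjSum univ) := card_le_card fun a ha => by
          cases a with
          | inl => simpa using ha
          | inr => exact mem_biUnion.mpr ⟨x, hx, by simp⟩
  have hQ : Fintype.card ι ≤ #(univ.filter fun x => (f x).isLeft) + k := by
    have hR : #(univ.filter fun x => ¬(f x).isLeft) ≤ k := by
      refine (card_le_card_of_injOn f (t := (univ : Finset (Fin k)).map .inr)
        (fun x hx => ?_) hf.injOn).trans (by simp)
      cases hfx : f x <;> simp_all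
    have := card_filter_add_card_filter_not (s := univ) fun x => (f x).isLeft
    rw [card_univ] at this
    omega
  obtain ⟨P, hPQ, hP⟩ := exists_subset_card_eq
    (show Fintype.card ι - k ≤ #(univ.filter fun x => (f x).isLeft) by omega)
  have hleft (x : P) : (f x).isLeft := by simpa using hPQ x.2
  refine ⟨P, hP, fun x => (f x).getLeft (hleft x), fun x y hxy => ?_, fun x => ?_⟩
  · exact Subtype.ext <| hf <| by
      rw [← Sum.inl_getLeft (f x) (hleft x), ← Sum.inl_getLeft (f y) (hleft y)]
      exact congrArg Sum.inl hxy
  · have := hft x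
    rwa [← Sum.inl_getLeft (f x) (hleft x), inl_mem_disjSum] at this

theorem Int.le_max_of_succ_sub_mono {f : ℕ → ℤ} {lo hi : ℕ}
    (hf : ∀ i j, lo ≤ i → i ≤ j → j < hi → f (i + 1) - f i ≤ f (j + 1) - f j)
    {c : ℕ} (hlo : lo ≤ c) (hhi : c ≤ hi) : f c ≤ max (f lo) (f hi) := by
  by_cases hdec : ∀ j, lo ≤ j → j < c → f (j + 1) ≤ f j
  · refine le_max_of_le_left ?_
    induction c, hlo using Nat.le_induction with
    | base => rfl
    | succ d hd ih =>
      exact (hdec d hd d.lt_succ_self).trans (ih (by omega) fun j hj _ => hdec j hj (by omega))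
  · push Not at hdec
    obtain ⟨j, hj, hjc, hfj⟩ := hdec
    refine le_max_of_le_right ?_
    induction hi, hhi using Nat.le_induction with
    | base => rfl
    | succ d hd ih =>
      have := hf j d hj (by omega) d.lt_succ_self
      have := ih fun i i' hi hii' hi' => hf i i' hi hii' (by omega)
      omega

/-- The paper's `g(a)`, with `m = n - k - 1`, computed in `ℤ`. -/
def kssBound (b n m s a : ℕ) : ℤ :=
  b.choose s * (m - a).choose s + a.choose s * n.choose s - a.choose s * (m - a).choose s

section kssBound

variable {b n m s : ℕ}

theorem kssBound_le_kssBound_of_add_eq (hnb : n ≤ b) {c d : ℕ} (hcd : c ≤ d)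
    (hm : c + d = m) :
    kssBound b n m s d ≤ kssBound b n m s c := by
  have hB : (n.choose s : ℤ) ≤ b.choose s := by exact_mod_cast Nat.choose_le_choose s hnb
  have hC : (c.choose s : ℤ) ≤ d.choose s := by exact_mod_cast Nat.choose_le_choose s hcd
  have : kssBound b n m s c - kssBound b n m s d =
      (b.choose s - n.choose s) * (d.choose s - c.choose s) := by
    simp only [kssBound, show m - c = d by omega, show m - d = c by omega]
    ring
  nlinarith [mul_nonneg (sub_nonneg.mpr hB) (sub_nonneg.mpr hC)]

theorem kssBound_succ_sub {a : ℕ} (ha : a < m) :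
    kssBound b n m (s + 1) (a + 1) - kssBound b n m (s + 1) a =
      a.choose s * (n.choose (s + 1) - (m - (a + 1)).choose (s + 1)) -
        (m - (a + 1)).choose s * (b.choose (s + 1) - a.choose (s + 1)) := by
  obtain ⟨d, hd⟩ : ∃ d, m - a = d + 1 := ⟨m - (a + 1), by omega⟩
  rw [kssBound, kssBound, hd, show m - (a + 1) = d by omega, Nat.choose_succ_succ,
    Nat.choose_succ_succ]
  push_cast
  ring

theorem kssBound_succ_sub_mono (hmn : m ≤ n) (hnb : n ≤ b) {i j : ℕ} (hij : i ≤ j)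
    (hj : j < m) :
    kssBound b n m s (i + 1) - kssBound b n m s i ≤
      kssBound b n m s (j + 1) - kssBound b n m s j := by
  rcases s with _ | s
  · simp [kssBound]
  rw [kssBound_succ_sub (hij.trans_lt hj), kssBound_succ_sub hj]
  have h₁ : (i.choose s : ℤ) ≤ j.choose s := by exact_mod_cast Nat.choose_le_choose s hij
  have h₂ : ((m - (j + 1)).choose (s + 1) : ℤ) ≤ (m - (i + 1)).choose (s + 1) := by
    exact_mod_cast Nat.choose_le_choose _ (by omega)
  have h₃ : ((m - (i + 1)).choose (s + 1) : ℤ) ≤ n.choose (s + 1) := by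
    exact_mod_cast Nat.choose_le_choose _ (by omega)
  have h₄ : ((m - (j + 1)).choose s : ℤ) ≤ (m - (i + 1)).choose s := by
    exact_mod_cast Nat.choose_le_choose _ (by omega)
  have h₅ : (i.choose (s + 1) : ℤ) ≤ j.choose (s + 1) := by
    exact_mod_cast Nat.choose_le_choose _ hij
  have h₆ : (j.choose (s + 1) : ℤ) ≤ b.choose (s + 1) := by
    exact_mod_cast Nat.choose_le_choose _ (by omega)
  have hgain : (i.choose s : ℤ) * (n.choose (s + 1) - (m - (i + 1)).choose (s + 1)) ≤
      j.choose s * (n.choose (s + 1) - (m - (j + 1)).choose (s + 1)) :=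
    mul_le_mul h₁ (by linarith) (by linarith) (by positivity)
  have hloss : ((m - (j + 1)).choose s : ℤ) * (b.choose (s + 1) - j.choose (s + 1)) ≤
      (m - (i + 1)).choose s * (b.choose (s + 1) - i.choose (s + 1)) :=
    mul_le_mul h₄ (by linarith) (by linarith) (by positivity)
  linarith

theorem kssBound_le_max (hmn : m ≤ n) (hnb : n ≤ b) {r c : ℕ} (hrc : r ≤ c)
    (hcm : c + r ≤ m) :
    kssBound b n m s c ≤ max (kssBound b n m s r) (kssBound b n m s (m / 2)) := by
  -- reflecting `c` to `m - c ≤ c` does not decrease `kssBound`; on `[r, m / 2]` it is convex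
  obtain ⟨c', hc', hrc', hcm'⟩ :
      ∃ c', kssBound b n m s c ≤ kssBound b n m s c' ∧ r ≤ c' ∧ c' ≤ m / 2 := by
    rcases le_total c (m - c) with h | h
    · exact ⟨c, le_rfl, hrc, by omega⟩
    · exact ⟨m - c, kssBound_le_kssBound_of_add_eq hnb h (by omega), by omega, by omega⟩
  exact hc'.trans <| Int.le_max_of_succ_sub_mono
    (fun i j _ hij hj => kssBound_succ_sub_mono hmn hnb hij (by omega)) hrc' hcm'

theorem le_kssBound {a c : ℕ} (hac : a + c ≤ m) (hcb : c ≤ b) :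
    (a.choose s * b.choose s + n.choose s * c.choose s - a.choose s * c.choose s : ℤ) ≤
      kssBound b n m s c := by
  have h₁ : (a.choose s : ℤ) ≤ (m - c).choose s := by
    exact_mod_cast Nat.choose_le_choose _ (by omega)
  have h₂ : (c.choose s : ℤ) ≤ b.choose s := by exact_mod_cast Nat.choose_le_choose _ hcb
  unfold kssBound
  nlinarith [mul_nonneg (sub_nonneg.mpr h₁) (sub_nonneg.mpr h₂)]

theorem natCast_eq_kssBound (hmn : m ≤ n) (a : ℕ) :
    ((b.choose s * (m - a).choose s + a.choose s * n.choose s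
        - a.choose s * (m - a).choose s : ℕ) : ℤ) = kssBound b n m s a := by
  have : a.choose s * (m - a).choose s ≤ a.choose s * n.choose s :=
    Nat.mul_le_mul_left _ (Nat.choose_le_choose _ (by omega))
  rw [Nat.cast_sub (by omega), kssBound]
  push_cast
  ring

end kssBound

namespace SimpleGraph
variable {V : Type*} {G : SimpleGraph V}

theorem exists_isMatching_ncard_edgeSet_eq {ι : Type*} {u v : ι → V}
    (hadj : ∀ i, G.Adj (u i) (v i)) (hu : Injective u) (hv : Injective v)
    (huv : ∀ i j, u i ≠ v j) :
    ∃ M : G.Subgraph, M.IsMatching ∧ M.edgeSet.ncard = Nat.card ι := by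
  refine ⟨⨆ i, G.subgraphOfAdj (hadj i), ?_, ?_⟩
  · refine Subgraph.IsMatching.iSup (fun i => .subgraphOfAdj _) fun i j hij => ?_
    simp only [(Subgraph.IsMatching.subgraphOfAdj _).support_eq_verts, subgraphOfAdj_verts,
      Set.disjoint_insert_left, Set.disjoint_insert_right, Set.disjoint_singleton,
      Set.mem_insert_iff, Set.mem_singleton_iff, not_or]
    exact ⟨⟨hu.ne (Ne.symm hij), huv j i⟩, huv i j, hv.ne hij⟩
  · rw [Subgraph.edgeSet_iSup]
    simp only [edgeSet_subgraphOfAdj, ← Set.range_eq_iUnion]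
    refine Set.ncard_range_of_injective fun i j hij => ?_
    rcases Sym2.eq_iff.mp hij with ⟨h, -⟩ | ⟨h, -⟩
    · exact hu h
    · exact absurd h (huv i j)

theorem IsBipartiteWith.exists_isMatching_or_card_biUnion_lt [Fintype V] [DecidableEq V]
    [DecidableRel G.Adj] {X Y : Finset V} (hG : G.IsBipartiteWith X Y) (k : ℕ) :
    (∃ M : G.Subgraph, M.IsMatching ∧ M.edgeSet.ncard = #X - k) ∨
      ∃ S ⊆ X, #(S.biUnion fun x => G.neighborFinset x) + k < #S := by
  refine or_iff_not_imp_right.mpr fun hS => ?_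
  simp only [not_exists, not_and, not_lt] at hS
  obtain ⟨P, hP, f, hf, hft⟩ := exists_injective_of_forall_card_le_card_biUnion_add
    (fun x : X => G.neighborFinset x) k fun S => by
      have := hS (S.image Subtype.val) (image_subset_iff.mpr fun x _ => x.2)
      rwa [card_image_of_injective _ Subtype.val_injective, image_biUnion] at this
  have hadj (x : P) : G.Adj x (f x) := (G.mem_neighborFinset _ _).mp (hft x)
  obtain ⟨M, hM, hMcard⟩ := exists_isMatching_ncard_edgeSet_eq (u := fun x : P => (x : V)) hadj
    (Subtype.val_injective.comp Subtype.val_injective) hf fun x y =>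
      hG.disjoint.ne_of_mem (x : X).2 (hG.mem_of_mem_adj (y : X).2 (hadj y))
  refine ⟨M, hM, ?_⟩
  rw [hMcard, Nat.card_eq_fintype_card, Fintype.card_coe, hP, Fintype.card_coe]

theorem IsBipartiteWith.subset_or_subset_of_forall_adj {X Y A B : Set V}
    (hG : G.IsBipartiteWith X Y) {a b : V} (ha : a ∈ A) (hb : b ∈ B)
    (hAB : ∀ x ∈ A, ∀ y ∈ B, G.Adj x y) : A ⊆ X ∧ B ⊆ Y ∨ A ⊆ Y ∧ B ⊆ X := by
  rcases hG.mem_of_adj (hAB a ha b hb) with ⟨haX, hbY⟩ | ⟨haY, hbX⟩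
  · exact .inl ⟨fun x hx => hG.mem_of_mem_adj' hbY (hAB x hx b hb),
      fun y hy => hG.mem_of_mem_adj haX (hAB a ha y hy)⟩
  · exact .inr ⟨fun x hx => hG.symm.mem_of_mem_adj' hbX (hAB x hx b hb),
      fun y hy => hG.symm.mem_of_mem_adj haY (hAB a ha y hy)⟩

variable [DecidableEq V] [DecidableRel G.Adj]

theorem IsBipartiteWith.degree_le_card_sdiff [Fintype V]
    {X Y S : Finset V} (hG : G.IsBipartiteWith X Y) {y : V} (hy : y ∈ Y)
    (hyS : y ∉ S.biUnion fun x => G.neighborFinset x) : G.degree y ≤ #(X \ S) := by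
  rw [← card_neighborFinset_eq_degree]
  refine card_le_card fun x hx => ?_
  rw [mem_neighborFinset] at hx
  refine mem_sdiff.mpr ⟨hG.mem_of_mem_adj' hy hx.symm, fun hxS => hyS ?_⟩
  exact mem_biUnion.mpr ⟨x, hxS, (G.mem_neighborFinset _ _).mpr hx.symm⟩

variable (G) in
def kssPairs (X Y : Finset V) (s : ℕ) : Finset (Finset V × Finset V) :=
  (X.powersetCard s ×ˢ Y.powersetCard s).filter fun p => ∀ x ∈ p.1, ∀ y ∈ p.2, G.Adj x y

variable {X Y : Finset V} {s : ℕ}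

theorem IsBipartiteWith.kssCount_le_card_kssPairs [Fintype V] (hG : G.IsBipartiteWith X Y) :
    kssCount G s ≤ #(kssPairs G X Y s) := by
  set K := kssPairs G X Y s
  suffices h : {p : Finset V × Finset V | #p.1 = s ∧ #p.2 = s ∧ Disjoint p.1 p.2 ∧
      ∀ x ∈ p.1, ∀ y ∈ p.2, G.Adj x y} ⊆ ↑(K ∪ K.image Prod.swap) by
    have hle := (Set.ncard_le_ncard h).trans_eq (Set.ncard_coe_finset _)
    have hK := (card_union_le K (K.image Prod.swap)).trans (Nat.add_le_add_left card_image_le _)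
    unfold kssCount
    omega
  rintro ⟨A, B⟩ ⟨hA, hB, -, hAB⟩
  simp only [coe_union, coe_image, Set.mem_union, Set.mem_image, mem_coe, K, kssPairs, mem_filter,
    mem_product, mem_powersetCard]
  rcases A.eq_empty_or_nonempty with rfl | ⟨a, ha⟩
  · obtain rfl : B = ∅ := card_eq_zero.mp (hB.trans hA.symm)
    simp_all
  obtain ⟨b, hb⟩ : B.Nonempty := card_pos.mp (hB.trans hA.symm ▸ card_pos.mpr ⟨a, ha⟩)
  rcases hG.subset_or_subset_of_forall_adj (mem_coe.mpr ha) (mem_coe.mpr hb) hAB with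
    ⟨hAX, hBY⟩ | ⟨hAY, hBX⟩
  · exact .inl ⟨⟨⟨coe_subset.mp hAX, hA⟩, coe_subset.mp hBY, hB⟩, hAB⟩
  · exact .inr ⟨(B, A), ⟨⟨⟨coe_subset.mp hBX, hB⟩, coe_subset.mp hAY, hA⟩,
      fun y hy x hx => (hAB x hx y hy).symm⟩, rfl⟩

theorem card_kssPairs_add_le {S T : Finset V} (hTY : T ⊆ Y)
    (hST : ∀ x ∈ S, ∀ y ∈ Y, G.Adj x y → y ∈ T) :
    #(kssPairs G X Y s) + (#(X \ S)).choose s * (#T).choose s ≤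
      (#(X \ S)).choose s * (#Y).choose s + (#X).choose s * (#T).choose s := by
  set U₁ := (X \ S).powersetCard s ×ˢ Y.powersetCard s
  set U₂ := X.powersetCard s ×ˢ T.powersetCard s
  have hK : kssPairs G X Y s ⊆ U₁ ∪ U₂ := by
    intro p hp
    simp only [kssPairs, mem_filter, mem_product, mem_powersetCard] at hp
    obtain ⟨⟨⟨hp₁X, hp₁⟩, hp₂Y, hp₂⟩, hadj⟩ := hp
    simp only [U₁, U₂, mem_union, mem_product, mem_powersetCard]
    by_cases hp₁S : p.1 ⊆ X \ S
    · exact .inl ⟨⟨hp₁S, hp₁⟩, hp₂Y, hp₂⟩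
    obtain ⟨x, hxp, hxXS⟩ := not_subset.mp hp₁S
    have hxS : x ∈ S := by simpa [hp₁X hxp] using hxXS
    exact .inr ⟨⟨hp₁X, hp₁⟩,
      fun y hy => hST x hxS y (hp₂Y hy) (hadj x hxp y hy), hp₂⟩
  have hU : (X \ S).powersetCard s ×ˢ T.powersetCard s ⊆ U₁ ∩ U₂ := by
    rw [product_inter_product]
    exact product_subset_product (subset_inter subset_rfl (powersetCard_mono sdiff_subset))
      (subset_inter (powersetCard_mono hTY) subset_rfl)
  have hunion := card_union_add_card_inter U₁ U₂
  have hinter := card_le_card hU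
  have hcover := card_le_card hK
  simp only [U₁, U₂, card_product, card_powersetCard] at hunion hinter hcover
  omega

theorem IsBipartiteWith.kssCount_le_kssBound [Fintype V] {S : Finset V} {m : ℕ}
    (hG : G.IsBipartiteWith X Y) (hSX : S ⊆ X)
    (hm : #(X \ S) + #(S.biUnion fun x => G.neighborFinset x) ≤ m) :
    (kssCount G s : ℤ) ≤ kssBound #Y #X m s #(S.biUnion fun x => G.neighborFinset x) := by
  set T := S.biUnion fun x => G.neighborFinset x
  have hTY : T ⊆ Y := biUnion_subset.mpr fun x hx y hy =>
    hG.mem_of_mem_adj (hSX hx) ((G.mem_neighborFinset _ _).mp hy)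
  have hK := card_kssPairs_add_le (G := G) (X := X) (s := s) hTY fun x hx y _ hxy =>
    mem_biUnion.mpr ⟨x, hx, (G.mem_neighborFinset _ _).mpr hxy⟩
  calc (kssCount G s : ℤ) ≤ #(kssPairs G X Y s) := by
        exact_mod_cast hG.kssCount_le_card_kssPairs
    _ ≤ (#(X \ S)).choose s * (#Y).choose s + (#X).choose s * (#T).choose s
          - (#(X \ S)).choose s * (#T).choose s := by
      have := (Nat.cast_le (α := ℤ)).mpr hK
      push_cast at this
      linarith
    _ ≤ kssBound #Y #X m s #T := le_kssBound hm (card_le_card hTY)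

end SimpleGraph

open SimpleGraph in
theorem stmt_15_general {V : Type*} [Fintype V] [DecidableEq V]
    (G : SimpleGraph V) [DecidableRel G.Adj] (n b k r s : ℕ)
    (X Y : Finset V) (hdisj : Disjoint X Y)
    (hX : X.card = n) (hY : Y.card = b) (hbn : n ≤ b)
    (hbip : ∀ x y : V, G.Adj x y → (x ∈ X ∧ y ∈ Y) ∨ (x ∈ Y ∧ y ∈ X))
    (hδ : ∀ v : V, r ≤ G.degree v)
    (g : ℕ → ℕ)
    (hg : ∀ a : ℕ, g a = b.choose s * (n - k - 1 - a).choose s + a.choose s * n.choose s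
          - a.choose s * (n - k - 1 - a).choose s)
    (hcount : max (g r) (g ((n - k - 1) / 2)) < kssCount G s) :
    ∃ M : G.Subgraph, M.IsMatching ∧ M.edgeSet.ncard = n - k := by
  have hG : G.IsBipartiteWith X Y :=
    ⟨disjoint_coe.mpr hdisj, fun x y h => by simpa using hbip x y h⟩
  obtain ⟨M, hM, hMcard⟩ | ⟨S, hSX, hS⟩ := hG.exists_isMatching_or_card_biUnion_lt k
  · exact ⟨M, hM, hX ▸ hMcard⟩
  set T := S.biUnion fun x => G.neighborFinset x
  have hSn : #S ≤ n := hX ▸ card_le_card hSX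
  obtain ⟨x, hx⟩ : S.Nonempty := card_pos.mp (by omega)
  have hrT : r ≤ #T := (hδ x).trans <| (card_neighborFinset_eq_degree G x).symm.trans_le <|
    card_le_card (subset_biUnion_of_mem (fun x => G.neighborFinset x) hx)
  obtain ⟨y, hyY, hyT⟩ : ∃ y ∈ Y, y ∉ T := exists_mem_notMem_of_card_lt_card (by omega)
  have hrS : r ≤ #(X \ S) := (hδ y).trans (hG.degree_le_card_sdiff hyY hyT)
  have hST : #(X \ S) + #T ≤ n - k - 1 := by rw [card_sdiff_of_subset hSX]; omega
  have key : (kssCount G s : ℤ) ≤ kssBound b n (n - k - 1) s #T := by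
    have := hG.kssCount_le_kssBound (s := s) hSX hST
    rwa [hX, hY] at this
  have hg' (a : ℕ) : (g a : ℤ) = kssBound b n (n - k - 1) s a := by
    rw [hg, natCast_eq_kssBound (by omega)]
  have hmax := key.trans (kssBound_le_max (by omega) hbn hrT (by omega))
  rw [← hg', ← hg'] at hmax
  exact absurd hcount (not_lt.mpr (by exact_mod_cast hmax))

/-- Let `G` be a connected bipartite graph with parts of sizes `n ≤ b`, minimum degree
`≥ r ≥ 1`, and `n ≥ 2k + 2r`; set `h = ⌊(n-k-1)/2⌋`. If the number of copies of `K_{s,s}`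
in `G` exceeds `max {g(r), g(h)}`, where
`g(a) = C(b,s)C(n-k-1-a,s) + C(a,s)C(n,s) − C(a,s)C(n-k-1-a,s)`, then `G` contains a matching
with `n - k` edges. -/
theorem stmt_15 {V : Type*} [Fintype V] [DecidableEq V]
    (G : SimpleGraph V) [DecidableRel G.Adj] (n b k r s : ℕ)
    (X Y : Finset V) (hdisj : Disjoint X Y) (hunion : X ∪ Y = Finset.univ)
    (hX : X.card = n) (hY : Y.card = b) (hbn : n ≤ b)
    (hbip : ∀ x y : V, G.Adj x y → (x ∈ X ∧ y ∈ Y) ∨ (x ∈ Y ∧ y ∈ X))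
    (hconn : G.Connected)
    (hr : 1 ≤ r) (hδ : ∀ v : V, r ≤ G.degree v) (hn : 2 * k + 2 * r ≤ n)
    (g : ℕ → ℕ)
    (hg : ∀ a : ℕ, g a = b.choose s * (n - k - 1 - a).choose s + a.choose s * n.choose s
          - a.choose s * (n - k - 1 - a).choose s)
    (hcount : max (g r) (g ((n - k - 1) / 2)) < kssCount G s) :
    ∃ M : G.Subgraph, M.IsMatching ∧ M.edgeSet.ncard = n - k :=
  stmt_15_general G n b k r s X Y hdisj hX hY hbn hbip hδ g hg hcount
end

section
/- For fixed positive integers b ≥ n, m ≤ n, and s, t, the function f(a) = C(b,s)·C(m-a,t) + C(a,s)·C(n,t) − C(a,s)·C(m-a,t) is convex in the integer variable a on 1 ≤ a ≤ ⌊m/2⌋; in particular, its maximum over any integer interval [r, h] ⊆ [1, ⌊m/2⌋] is attained at an endpoint, i.e., max_{r ≤ a ≤ h} f(a) = max{f(r), f(h)}. -/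
set_option maxHeartbeats 1000000


/-- For fixed positive integers `b ≥ n`, `m ≤ n`, `s`, `t`, the function
`f(a) = C(b,s)·C(m-a,t) + C(a,s)·C(n,t) − C(a,s)·C(m-a,t)` (valued in `ℤ`) is convex in
the integer variable `a` on `1 ≤ a ≤ ⌊m/2⌋` (its first differences are nondecreasing);
in particular, its maximum over any integer interval `[r, h] ⊆ [1, ⌊m/2⌋]` is attained at
an endpoint: `max_{r ≤ a ≤ h} f(a) = max {f(r), f(h)}`. -/
theorem stmt_19 (b n m s t : ℕ)
    (hb : 1 ≤ b) (hn : 1 ≤ n) (hm : 1 ≤ m) (hs : 1 ≤ s) (ht : 1 ≤ t)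
    (hbn : n ≤ b) (hmn : m ≤ n)
    (f : ℕ → ℤ)
    (hf : ∀ a : ℕ, f a = (b.choose s : ℤ) * ((m - a).choose t : ℤ)
          + (a.choose s : ℤ) * (n.choose t : ℤ)
          - (a.choose s : ℤ) * ((m - a).choose t : ℤ)) :
    (∀ a : ℕ, 1 ≤ a → a + 2 ≤ m / 2 → f (a + 1) - f a ≤ f (a + 2) - f (a + 1)) ∧
      (∀ r h : ℕ, 1 ≤ r → r ≤ h → h ≤ m / 2 →
        ∀ a : ℕ, r ≤ a → a ≤ h → f a ≤ max (f r) (f h)) := by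
  obtain ⟨s', rfl⟩ : ∃ s', s = s' + 1 := ⟨s - 1, by omega⟩
  obtain ⟨t', rfl⟩ : ∃ t', t = t' + 1 := ⟨t - 1, by omega⟩
  have step : ∀ a : ℕ, 1 ≤ a → a + 2 ≤ m / 2 → f (a + 1) - f a ≤ f (a + 2) - f (a + 1) := by
    intro a ha ham
    have hm4 : 2 * a + 4 ≤ m := by omega
    set p := m - (a + 2) with hp
    have e0 : m - a = p + 2 := by omega
    have e1 : m - (a + 1) = p + 1 := by omega
    have e2 : m - (a + 2) = p := by omega
    have hG1 : (a + 1).choose (s' + 1) = a.choose s' + a.choose (s' + 1) :=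
      Nat.choose_succ_succ a s'
    have hG2 : (a + 2).choose (s' + 1) = (a + 1).choose s' + (a + 1).choose (s' + 1) :=
      Nat.choose_succ_succ (a + 1) s'
    have hgm : a.choose s' ≤ (a + 1).choose s' := Nat.choose_le_choose _ (by omega)
    have hH1 : (p + 1).choose (t' + 1) = p.choose t' + p.choose (t' + 1) :=
      Nat.choose_succ_succ p t'
    have hH2 : (p + 2).choose (t' + 1) = (p + 1).choose t' + (p + 1).choose (t' + 1) :=
      Nat.choose_succ_succ (p + 1) t'
    have hhm : p.choose t' ≤ (p + 1).choose t' := Nat.choose_le_choose _ (by omega)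
    have hBG : (a + 2).choose (s' + 1) ≤ b.choose (s' + 1) :=
      Nat.choose_le_choose _ (by omega)
    have hNH : (p + 1).choose (t' + 1) ≤ n.choose (t' + 1) :=
      Nat.choose_le_choose _ (by omega)
    rw [hf a, hf (a + 1), hf (a + 2), e0, e1, e2]
    have hG1' : (((a + 1).choose (s' + 1) : ℕ) : ℤ) = a.choose s' + a.choose (s' + 1) := by
      exact_mod_cast hG1
    have hG2' : (((a + 2).choose (s' + 1) : ℕ) : ℤ)
        = (a + 1).choose s' + (a + 1).choose (s' + 1) := by exact_mod_cast hG2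
    have hgm' : ((a.choose s' : ℕ) : ℤ) ≤ (a + 1).choose s' := by exact_mod_cast hgm
    have hH1' : (((p + 1).choose (t' + 1) : ℕ) : ℤ) = p.choose t' + p.choose (t' + 1) := by
      exact_mod_cast hH1
    have hH2' : (((p + 2).choose (t' + 1) : ℕ) : ℤ)
        = (p + 1).choose t' + (p + 1).choose (t' + 1) := by exact_mod_cast hH2
    have hhm' : ((p.choose t' : ℕ) : ℤ) ≤ (p + 1).choose t' := by exact_mod_cast hhm
    have hBG' : (((a + 2).choose (s' + 1) : ℕ) : ℤ) ≤ b.choose (s' + 1) := by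
      exact_mod_cast hBG
    have hNH' : (((p + 1).choose (t' + 1) : ℕ) : ℤ) ≤ n.choose (t' + 1) := by
      exact_mod_cast hNH
    rw [hG2', hG1', hH2', hH1']
    have hg0 : (0 : ℤ) ≤ a.choose s' := Int.natCast_nonneg _
    have hg1 : (0 : ℤ) ≤ (a + 1).choose s' := Int.natCast_nonneg _
    have hh0 : (0 : ℤ) ≤ p.choose t' := Int.natCast_nonneg _
    have hh1 : (0 : ℤ) ≤ (p + 1).choose t' := Int.natCast_nonneg _
    have key1 : (0 : ℤ) ≤ (((a + 1).choose s' : ℤ) - a.choose s')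
        * ((n.choose (t' + 1) : ℤ) - (p).choose (t' + 1) - p.choose t') :=
      mul_nonneg (by linarith) (by linarith [hNH', hH1'])
    have key2 : (0 : ℤ) ≤ ((b.choose (s' + 1) : ℤ) - a.choose (s' + 1)
          - a.choose s' - (a + 1).choose s')
        * (((p + 1).choose t' : ℤ) - p.choose t') :=
      mul_nonneg (by linarith [hBG', hG1', hG2']) (by linarith)
    have key3 : (0 : ℤ) ≤ ((a.choose s' : ℤ) + (a + 1).choose s')
        * ((p + 1).choose t' : ℤ) :=
      mul_nonneg (by linarith) (by linarith)
    linarith [key1, key2, key3]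
  constructor
  · exact step
  · intro r h hr hrh hhm a har hah
    have hr1 : 1 ≤ r := hr
    -- monotone differences
    have mono : ∀ j k : ℕ, 1 ≤ j → j ≤ k → k + 1 ≤ m / 2 →
        f (j + 1) - f j ≤ f (k + 1) - f k := by
      intro j k hj hjk hk
      induction k with
      | zero => omega
      | succ k ih =>
        rcases Nat.lt_or_ge j (k + 1) with hlt | hge
        · have h1 : f (j + 1) - f j ≤ f (k + 1) - f k := ih (by omega) (by omega)
          have h2 : f (k + 1) - f k ≤ f (k + 2) - f (k + 1) := step k (by omega) (by omega)
          calc f (j + 1) - f j ≤ f (k + 1) - f k := h1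
            _ ≤ f (k + 1 + 1) - f (k + 1) := h2
        · have : j = k + 1 := by omega
          subst this; exact le_rfl
    by_cases hcase : ∀ j, r ≤ j → j < a → f (j + 1) ≤ f j
    · -- f a ≤ f r
      have decr : ∀ x, r ≤ x → x ≤ a → f x ≤ f r := by
        intro x hx
        induction x with
        | zero => intro _; have hr0 : r = 0 := Nat.le_zero.mp hx; rw [hr0]
        | succ x ih =>
          intro hxa
          rcases Nat.lt_or_ge r (x + 1) with hlt | hge
          · have h1 : f x ≤ f r := ih (by omega) (by omega)
            have h2 : f (x + 1) ≤ f x := hcase x (by omega) (by omega)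
            linarith
          · have : r = x + 1 := by omega
            simp [this]
      exact le_max_of_le_left (decr a har le_rfl)
    · push_neg at hcase
      obtain ⟨j, hrj, hja, hfj⟩ := hcase
      have incr : ∀ k, a ≤ k → k ≤ h → f a ≤ f k := by
        intro k hk
        induction k with
        | zero => intro _; have ha0 : a = 0 := Nat.le_zero.mp hk; rw [ha0]
        | succ k ih =>
          intro hkh
          rcases Nat.lt_or_ge a (k + 1) with hlt | hge
          · have h1 : f a ≤ f k := ih (by omega) (by omega)
            have h2 : f (j + 1) - f j ≤ f (k + 1) - f k :=
              mono j k (by omega) (by omega) (by omega)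
            linarith
          · have : a = k + 1 := by omega
            simp [this]
      exact le_max_of_le_right (incr h hah le_rfl)
end
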